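/- arXiv:2306.01626 — 8 statements merged into one kernel-verified Lean document; each statement's English description precedes it below -/
import Mathlib

section
/- Let n ≥ 1, let B be an antisymmetric n×n integer matrix and write ⟨γ,γ'⟩ = γᵀBγ' for the induced antisymmetric bilinear pairing on ℤⁿ. Let P : ℤⁿ → ℤⁿ be a ℤ-linear map, let N ≥ 1, and let S be a finite subset of ℤⁿ with P(S) = S. Let g : ℤⁿ → ℂ satisfy g(P(s)) = g(s) for all s ∈ S, and assume that for every s ∈ S the orbit sum s + P(s) + ⋯ + P^{N−1}(s) lies in the radical of the pairing, i.e. ⟨γ, s + P(s) + ⋯ + P^{N−1}(s)⟩ = 0 for all γ ∈ ℤⁿ. Then for every γ ∈ ℤⁿ one has ∑_{s ∈ S} ⟨γ, s⟩ · g(s) = 0. -/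
open Matrix

/-- The key vanishing lemma underlying Theorem 3.1: for an antisymmetric integer pairing
`⟨γ,γ'⟩ = γᵀBγ'` on `ℤⁿ`, a linear symmetry `P` of a finite `P`-invariant set `S`, and a
`P`-invariant function `g` on `S`, if every orbit sum `s + P s + ⋯ + P^(N-1) s` lies in the
radical of the pairing, then `∑_{s ∈ S} ⟨γ,s⟩ g(s) = 0`. -/
theorem stmt_0 (n : ℕ) (hn : 1 ≤ n) (B : Matrix (Fin n) (Fin n) ℤ)
    (hB : Bᵀ = -B)
    (P : (Fin n → ℤ) →ₗ[ℤ] (Fin n → ℤ)) (N : ℕ) (hN : 1 ≤ N)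
    (S : Finset (Fin n → ℤ)) (hS : S.image P = S)
    (g : (Fin n → ℤ) → ℂ) (hg : ∀ s ∈ S, g (P s) = g s)
    (horb : ∀ s ∈ S, ∀ γ : Fin n → ℤ,
      γ ⬝ᵥ B.mulVec (∑ j ∈ Finset.range N, (⇑P)^[j] s) = 0)
    (γ : Fin n → ℤ) :
    ∑ s ∈ S, ((γ ⬝ᵥ B.mulVec s : ℤ) : ℂ) * g s = 0 := by
  classical
  have hmem : ∀ s ∈ S, P s ∈ S := by
    intro s hs; rw [← hS]; exact Finset.mem_image_of_mem _ hs
  have hmemIter : ∀ j, ∀ s ∈ S, (⇑P)^[j] s ∈ S := by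
    intro j
    induction j with
    | zero => simp
    | succ k ih =>
      intro s hs
      rw [Function.iterate_succ_apply']
      exact hmem _ (ih s hs)
  have hgIter : ∀ j, ∀ s ∈ S, g ((⇑P)^[j] s) = g s := by
    intro j
    induction j with
    | zero => simp
    | succ k ih =>
      intro s hs
      rw [Function.iterate_succ_apply', hg _ (hmemIter k s hs), ih s hs]
  have hSIter : ∀ j, S.image ((⇑P)^[j]) = S := by
    intro j
    induction j with
    | zero => simp
    | succ k ih =>
      rw [Function.iterate_succ', ← Finset.image_image, ih, hS]
  have hinj : ∀ j, Set.InjOn ((⇑P)^[j]) S :=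
    fun j => Finset.injOn_of_card_image_eq (by rw [hSIter j])
  -- reindexing: the sum is invariant under applying P^[j]
  have hre : ∀ j, ∑ s ∈ S, ((γ ⬝ᵥ B.mulVec s : ℤ) : ℂ) * g s
      = ∑ s ∈ S, ((γ ⬝ᵥ B.mulVec ((⇑P)^[j] s) : ℤ) : ℂ) * g s := by
    intro j
    conv_lhs => rw [← hSIter j]
    rw [Finset.sum_image (fun x hx y hy h => hinj j hx hy h)]
    exact Finset.sum_congr rfl fun s hs => by rw [hgIter j s hs]
  have key : (N : ℂ) * ∑ s ∈ S, ((γ ⬝ᵥ B.mulVec s : ℤ) : ℂ) * g s = 0 := by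
    have h1 : (N : ℂ) * ∑ s ∈ S, ((γ ⬝ᵥ B.mulVec s : ℤ) : ℂ) * g s
        = ∑ j ∈ Finset.range N, ∑ s ∈ S,
            ((γ ⬝ᵥ B.mulVec ((⇑P)^[j] s) : ℤ) : ℂ) * g s := by
      rw [Finset.sum_congr rfl fun j _ => (hre j).symm]
      simp [Finset.sum_const, mul_comm]
    rw [h1, Finset.sum_comm]
    refine Finset.sum_eq_zero fun s hs => ?_
    have horb' := horb s hs γ
    have hsum : ∑ j ∈ Finset.range N, (γ ⬝ᵥ B.mulVec ((⇑P)^[j] s) : ℤ) = 0 := by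
      rw [← horb']
      rw [show B.mulVec (∑ j ∈ Finset.range N, (⇑P)^[j] s)
          = ∑ j ∈ Finset.range N, B.mulVec ((⇑P)^[j] s) from
        map_sum B.mulVecLin _ _]
      rw [show γ ⬝ᵥ (∑ j ∈ Finset.range N, B.mulVec ((⇑P)^[j] s))
          = ∑ j ∈ Finset.range N, γ ⬝ᵥ B.mulVec ((⇑P)^[j] s) from by
        simp [dotProduct, Finset.mul_sum]; rw [Finset.sum_comm]]
    calc ∑ j ∈ Finset.range N, ((γ ⬝ᵥ B.mulVec ((⇑P)^[j] s) : ℤ) : ℂ) * g s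
        = ((∑ j ∈ Finset.range N, (γ ⬝ᵥ B.mulVec ((⇑P)^[j] s) : ℤ) : ℤ) : ℂ) * g s := by
          rw [← Finset.sum_mul]; push_cast; ring
      _ = 0 := by rw [hsum]; simp
  have hNne : (N : ℂ) ≠ 0 := by exact_mod_cast (Nat.pos_of_ne_zero (by omega)).ne'
  exact (mul_eq_zero.mp key).resolve_left hNne
end

section
/- Let n ≥ 1, let B be an antisymmetric n×n integer matrix with pairing ⟨γ,γ'⟩ = γᵀBγ' on ℤⁿ, let P : ℤⁿ → ℤⁿ be a ℤ-linear map, N ≥ 1, and let S be a finite subset of ℤⁿ with P(S) = S. Let Ω : ℤⁿ → ℤ and σ : ℤⁿ → {−1,1} satisfy Ω(P(s)) = Ω(s) and σ(P(s)) = σ(s) for all s ∈ S, and let Z : ℤⁿ → ℂ be an additive map with Z ∘ P = Z. Assume that for every s ∈ S the orbit sum s + P(s) + ⋯ + P^{N−1}(s) lies in the radical of the pairing. Then for every γ ∈ ℤⁿ and every ε ∈ ℂ, the instanton-correction term of the conformal TBA equations vanishes: ∑_{s ∈ S} Ω(s)·⟨γ,s⟩·∫₀^∞ (−Z(s))/((−t·Z(s))²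 − ε²) · log(1 − σ(s)·exp(Z(s)/(−t·Z(s)))) dt = 0, where log is the principal branch of the complex logarithm and the integral is the Lebesgue/Bochner integral over t ∈ (0,∞) (no integrability hypothesis is needed, since the integrand depends on s only through the P-orbit-invariant data Z(s), σ(s)). Consequently X_γ(ε) := exp(Z(γ)/ε) is a semiclassically exact solution of the TBA system log X_γ = Z(γ)/ε − (ε/(πi)) ∑_{s∈S} Ω(s)⟨γ,s⟩ ∫_{ℓ_s} dε'/(ε'² − ε²) · log(1 − σ(s)X_s(ε')), with the BPS ray ℓ_s parametrized as ε' = −t·Z(s), t ∈ (0,∞). -/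
open Matrix MeasureTheory

/-- Theorem 3.1 of the paper for a finite BPS spectrum: under the symmetry assumptions,
the instanton-correction term of the conformal GMN TBA equations vanishes, and hence
`X_γ(ε) = exp(Z γ / ε)` is a semiclassically exact solution of the TBA system, where for each
state `s` the BPS ray `ℓ_s` is parametrized as `ε' = -t·Z(s)`, `t ∈ (0,∞)`. -/
theorem stmt_1 (n : ℕ) (hn : 1 ≤ n) (B : Matrix (Fin n) (Fin n) ℤ)
    (hB : Bᵀ = -B)
    (P : (Fin n → ℤ) →ₗ[ℤ] (Fin n → ℤ)) (N : ℕ) (hN : 1 ≤ N)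
    (S : Finset (Fin n → ℤ)) (hS : S.image P = S)
    (Ω : (Fin n → ℤ) → ℤ) (hΩ : ∀ s ∈ S, Ω (P s) = Ω s)
    (σ : (Fin n → ℤ) → ℤ) (hσval : ∀ s ∈ S, σ s = 1 ∨ σ s = -1)
    (hσ : ∀ s ∈ S, σ (P s) = σ s)
    (Z : (Fin n → ℤ) →+ ℂ) (hZ : ∀ v, Z (P v) = Z v)
    (horb : ∀ s ∈ S, ∀ γ : Fin n → ℤ,
      γ ⬝ᵥ B.mulVec (∑ j ∈ Finset.range N, (⇑P)^[j] s) = 0)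
    (γ : Fin n → ℤ) (ε : ℂ) :
    (∑ s ∈ S, (Ω s : ℂ) * ((γ ⬝ᵥ B.mulVec s : ℤ) : ℂ) *
        ∫ t in Set.Ioi (0:ℝ), (-(Z s)) / ((-(t:ℂ) * Z s) ^ 2 - ε ^ 2) *
          Complex.log (1 - (σ s : ℂ) * Complex.exp (Z s / (-(t:ℂ) * Z s)))) = 0 ∧
    Complex.exp (Z γ / ε) =
      Complex.exp (Z γ / ε - ε / ((Real.pi : ℂ) * Complex.I) *
        ∑ s ∈ S, (Ω s : ℂ) * ((γ ⬝ᵥ B.mulVec s : ℤ) : ℂ) *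
          ∫ t in Set.Ioi (0:ℝ), (-(Z s)) / ((-(t:ℂ) * Z s) ^ 2 - ε ^ 2) *
            Complex.log (1 - (σ s : ℂ) * Complex.exp (Z s / (-(t:ℂ) * Z s)))) := by
  classical
  -- the integral as a function of the state
  set I : (Fin n → ℤ) → ℂ := fun s =>
    ∫ t in Set.Ioi (0:ℝ), (-(Z s)) / ((-(t:ℂ) * Z s) ^ 2 - ε ^ 2) *
      Complex.log (1 - (σ s : ℂ) * Complex.exp (Z s / (-(t:ℂ) * Z s))) with hIdef
  have hinj : Set.InjOn P S := by
    rw [← Finset.card_image_iff, hS]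
  have hIinv : ∀ s ∈ S, I (P s) = I s := by
    intro s hs
    simp only [hIdef, hZ, hσ s hs]
  -- the pairing as a linear map
  let A : (Fin n → ℤ) →+ ℤ :=
    { toFun := fun v => γ ⬝ᵥ B.mulVec v
      map_zero' := by simp
      map_add' := fun u v => by simp [Matrix.mulVec_add, dotProduct_add] }
  have key : ∀ j : ℕ,
      (∑ s ∈ S, (Ω s : ℂ) * ((A s : ℤ) : ℂ) * I s)
        = ∑ s ∈ S, (Ω s : ℂ) * ((A ((⇑P)^[j] s) : ℤ) : ℂ) * I s := by
    intro j
    induction j with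
    | zero => simp
    | succ j ih =>
      rw [ih]
      have hre : (∑ s ∈ S, (Ω s : ℂ) * ((A ((⇑P)^[j] s) : ℤ) : ℂ) * I s)
          = ∑ s ∈ S, (Ω (P s) : ℂ) * ((A ((⇑P)^[j] (P s)) : ℤ) : ℂ) * I (P s) := by
        conv_lhs => rw [← hS]
        rw [Finset.sum_image (fun x hx y hy h => hinj hx hy h)]
      rw [hre]
      refine Finset.sum_congr rfl fun s hs => ?_
      rw [hΩ s hs, hIinv s hs, ← Function.iterate_succ_apply]
  have hzero : (∑ s ∈ S, (Ω s : ℂ) * ((A s : ℤ) : ℂ) * I s) = 0 := by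
    have hNmul : (N : ℂ) * (∑ s ∈ S, (Ω s : ℂ) * ((A s : ℤ) : ℂ) * I s) = 0 := by
      have h1 : (N : ℂ) * (∑ s ∈ S, (Ω s : ℂ) * ((A s : ℤ) : ℂ) * I s)
          = ∑ j ∈ Finset.range N, ∑ s ∈ S, (Ω s : ℂ) * ((A ((⇑P)^[j] s) : ℤ) : ℂ) * I s := by
        rw [Finset.sum_congr rfl fun j _ => (key j).symm, Finset.sum_const,
          Finset.card_range, nsmul_eq_mul]
      rw [h1, Finset.sum_comm]
      refine Finset.sum_eq_zero fun s hs => ?_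
      have hsum : (∑ j ∈ Finset.range N, (A ((⇑P)^[j] s) : ℂ)) = 0 := by
        have : (∑ j ∈ Finset.range N, A ((⇑P)^[j] s)) = 0 := by
          rw [← map_sum]
          exact horb s hs γ
        exact_mod_cast this
      calc (∑ j ∈ Finset.range N, (Ω s : ℂ) * ((A ((⇑P)^[j] s) : ℤ) : ℂ) * I s)
          = ((Ω s : ℂ) * I s) * ∑ j ∈ Finset.range N, (A ((⇑P)^[j] s) : ℂ) := by
            rw [Finset.mul_sum]; exact Finset.sum_congr rfl fun j _ => by ring
        _ = 0 := by rw [hsum, mul_zero]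
    have hNne : (N : ℂ) ≠ 0 := Nat.cast_ne_zero.mpr (by omega)
    exact (mul_eq_zero.mp hNmul).resolve_left hNne
  have hzero' : (∑ s ∈ S, (Ω s : ℂ) * ((γ ⬝ᵥ B.mulVec s : ℤ) : ℂ) *
      ∫ t in Set.Ioi (0:ℝ), (-(Z s)) / ((-(t:ℂ) * Z s) ^ 2 - ε ^ 2) *
        Complex.log (1 - (σ s : ℂ) * Complex.exp (Z s / (-(t:ℂ) * Z s)))) = 0 := hzero
  exact ⟨hzero', by rw [hzero', mul_zero, sub_zero]⟩
end

section
/- Let n ≥ 1, let B be an antisymmetric n×n integer matrix with pairing ⟨γ,γ'⟩ = γᵀBγ' on ℤⁿ, let P : ℤⁿ → ℤⁿ be a ℤ-linear map, N ≥ 1, and let S be a finite subset of ℤⁿ with P(S) = S. Let Ω : ℤⁿ → ℤ satisfy Ω(P(s)) = Ω(s) for all s ∈ S, let x : ℤⁿ → ℂ× be a function into the nonzero complex numbers with x(P(s)) = x(s) for all s ∈ S, and assume that for every s ∈ S the orbit sum s + P(s) + ⋯ + P^{N−1}(s) lies in the radical of the pairing. Then for every γ ∈ ℤⁿ one has ∏_{s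 ∈ S} x(s)^{⟨γ,s⟩·Ω(s)} = 1. In particular, for a stability condition aligning the central charges along a P-orbit, the Kontsevich–Soibelman wall-crossing jump X_γ ↦ X_γ·∏_{s} (1 + σ(s)X_s)^{⟨γ,s⟩Ω(s)} acts trivially on the functions X_γ = exp(Z_γ/z). -/
open Matrix

private lemma zpow_sum_range {G : Type*} [CommGroup G] (b : G) (f : ℕ → ℤ) (k : ℕ) :
    ∏ j ∈ Finset.range k, b ^ f j = b ^ (∑ j ∈ Finset.range k, f j) := by
  induction k with
  | zero => simp
  | succ k ih => rw [Finset.prod_range_succ, Finset.sum_range_succ, _root_.zpow_add, ih]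

private lemma periodic_sum_mul {a : ℕ → ℤ} {k : ℕ} (hk : ∀ j, a (j + k) = a j) (m : ℕ) :
    ∑ j ∈ Finset.range (m * k), a j = m * ∑ j ∈ Finset.range k, a j := by
  induction m with
  | zero => simp
  | succ m ih =>
    have hper : ∀ i j, a (i + j * k) = a i := by
      intro i j
      induction j with
      | zero => simp
      | succ j ihj => rw [Nat.succ_mul, ← Nat.add_assoc, hk, ihj]
    rw [Nat.succ_mul, Finset.sum_range_add, ih]
    have : ∑ i ∈ Finset.range k, a (m * k + i) = ∑ i ∈ Finset.range k, a i := by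
      apply Finset.sum_congr rfl
      intro i _
      rw [Nat.add_comm, hper]
    rw [this]
    push_cast
    ring

private lemma blocks_sum_zero {a : ℕ → ℤ} {N : ℕ}
    (h : ∀ i, ∑ j ∈ Finset.range N, a (i * N + j) = 0) (k : ℕ) :
    ∑ j ∈ Finset.range (k * N), a j = 0 := by
  induction k with
  | zero => simp
  | succ k ih =>
    rw [Nat.succ_mul, Finset.sum_range_add, ih, zero_add]
    simpa using h k

private lemma pair_sum {n : ℕ} (B : Matrix (Fin n) (Fin n) ℤ) (γ : Fin n → ℤ)
    {ι : Type*} (t : Finset ι) (f : ι → (Fin n → ℤ)) :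
    γ ⬝ᵥ B.mulVec (∑ j ∈ t, f j) = ∑ j ∈ t, γ ⬝ᵥ B.mulVec (f j) := by
  classical
  induction t using Finset.induction_on with
  | empty => simp
  | insert _ _ hnot ih =>
    rw [Finset.sum_insert hnot, Finset.sum_insert hnot, Matrix.mulVec_add, dotProduct_add, ih]

private lemma aux {n : ℕ} (B : Matrix (Fin n) (Fin n) ℤ)
    (P : (Fin n → ℤ) →ₗ[ℤ] (Fin n → ℤ)) (N : ℕ) (hN : 1 ≤ N)
    (Ω : (Fin n → ℤ) → ℤ) (x : (Fin n → ℤ) → ℂˣ) (γ : Fin n → ℤ)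
    (S : Finset (Fin n → ℤ)) : S.image P = S →
    (∀ s ∈ S, Ω (P s) = Ω s) → (∀ s ∈ S, x (P s) = x s) →
    (∀ s ∈ S, γ ⬝ᵥ B.mulVec (∑ j ∈ Finset.range N, (⇑P)^[j] s) = 0) →
    ∏ s ∈ S, (x s) ^ ((γ ⬝ᵥ B.mulVec s) * Ω s) = 1 := by
  classical
  induction S using Finset.strongInduction with
  | _ S ih =>
  intro hS hΩ hx horb
  rcases S.eq_empty_or_nonempty with rfl | ⟨s, hs⟩
  · simp
  have hmapsto : ∀ t ∈ S, P t ∈ S := fun t ht => hS ▸ Finset.mem_image_of_mem P ht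
  have hinj : Set.InjOn P S := Finset.injOn_of_card_image_eq (by rw [hS])
  have hiter_mem : ∀ (j : ℕ) (t : Fin n → ℤ), t ∈ S → (⇑P)^[j] t ∈ S := by
    intro j
    induction j with
    | zero => intro t ht; simpa using ht
    | succ j ihj =>
      intro t ht
      rw [Function.iterate_succ_apply']
      exact hmapsto _ (ihj t ht)
  -- existence of a period for s
  have hex : ∃ k, 0 < k ∧ (⇑P)^[k] s = s := by
    obtain ⟨i, hi, j, hj, hne, heq⟩ :=
      Finset.exists_ne_map_eq_of_card_lt_of_maps_to (t := S)
        (s := Finset.range (S.card + 1)) (by simp) (fun a _ => hiter_mem a s hs)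
    have key : ∀ i j : ℕ, i < j → (⇑P)^[i] s = (⇑P)^[j] s → ∃ k, 0 < k ∧ (⇑P)^[k] s = s := by
      intro i j hlt h
      have hiterinj : ∀ (m : ℕ), Set.InjOn ((⇑P)^[m]) S := by
        intro m
        induction m with
        | zero => intro u hu v hv h'; simpa using h'
        | succ m ihm =>
          intro u hu v hv h'
          rw [Function.iterate_succ_apply', Function.iterate_succ_apply'] at h'
          exact ihm hu hv (hinj (hiter_mem m u hu) (hiter_mem m v hv) h')
      have h2 : (⇑P)^[i] ((⇑P)^[j - i] s) = (⇑P)^[i] s := by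
        rw [← Function.iterate_add_apply, show i + (j - i) = j by omega]
        exact h.symm
      exact ⟨j - i, by omega, hiterinj i (hiter_mem _ s hs) hs h2⟩
    rcases Nat.lt_or_ge i j with hlt | hge
    · exact key i j hlt heq
    · exact key j i (by omega) heq.symm
  obtain ⟨k, hk0, hks, hkmin⟩ :
      ∃ k, 0 < k ∧ (⇑P)^[k] s = s ∧ ∀ m, 0 < m → m < k → (⇑P)^[m] s ≠ s := by
    refine ⟨Nat.find hex, (Nat.find_spec hex).1, (Nat.find_spec hex).2, ?_⟩
    intro m hm hmk hcon
    exact Nat.find_min hex hmk ⟨hm, hcon⟩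
  set g : ℕ → (Fin n → ℤ) := fun j => (⇑P)^[j] s with hg
  have ginj : ∀ i ∈ Finset.range k, ∀ j ∈ Finset.range k, g i = g j → i = j := by
    have step : ∀ i j : ℕ, i < j → j < k → g i = g j → False := by
      intro i j hlt hjk h
      have hiterinj : ∀ (m : ℕ), Set.InjOn ((⇑P)^[m]) S := by
        intro m
        induction m with
        | zero => intro u hu v hv h'; simpa using h'
        | succ m ihm =>
          intro u hu v hv h'
          rw [Function.iterate_succ_apply', Function.iterate_succ_apply'] at h'
          exact ihm hu hv (hinj (hiter_mem m u hu) (hiter_mem m v hv) h')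
      have h2 : (⇑P)^[i] ((⇑P)^[j - i] s) = (⇑P)^[i] s := by
        rw [← Function.iterate_add_apply, show i + (j - i) = j by omega]
        exact h.symm
      exact hkmin (j - i) (by omega) (by omega)
        (hiterinj i (hiter_mem _ s hs) hs h2)
    intro i hi j hj h
    rw [Finset.mem_range] at hi hj
    by_contra hne
    rcases Nat.lt_or_ge i j with hlt | hge
    · exact step i j hlt hj h
    · exact step j i (by omega) hi h.symm
  set O : Finset (Fin n → ℤ) := (Finset.range k).image g with hO
  have hOsub : O ⊆ S := by
    intro t ht
    obtain ⟨j, _, rfl⟩ := Finset.mem_image.mp ht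
    exact hiter_mem j s hs
  have hsO : s ∈ O := Finset.mem_image.mpr ⟨0, by simp [hk0], rfl⟩
  -- orbit quantities
  set a : ℕ → ℤ := fun j => γ ⬝ᵥ B.mulVec (g j) with ha
  have hgper : ∀ j, g (j + k) = g j := by
    intro j
    show (⇑P)^[j + k] s = (⇑P)^[j] s
    rw [Function.iterate_add_apply, hks]
  have haper : ∀ j, a (j + k) = a j := fun j => by rw [ha]; simp only []; rw [hgper j]
  have hpair : ∀ t ∈ S, ∑ j ∈ Finset.range N, γ ⬝ᵥ B.mulVec ((⇑P)^[j] t) = 0 := by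
    intro t ht
    rw [← pair_sum B γ]
    exact horb t ht
  have hblocks : ∀ i, ∑ j ∈ Finset.range N, a (i * N + j) = 0 := by
    intro i
    have ht := hpair ((⇑P)^[i * N] s) (hiter_mem _ s hs)
    calc ∑ j ∈ Finset.range N, a (i * N + j)
        = ∑ j ∈ Finset.range N, γ ⬝ᵥ B.mulVec ((⇑P)^[j] ((⇑P)^[i * N] s)) := by
          refine Finset.sum_congr rfl fun j _ => ?_
          rw [ha]
          simp only []
          rw [hg]
          simp only []
          rw [← Function.iterate_add_apply, Nat.add_comm]
      _ = 0 := ht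
  have hsum0 : ∑ j ∈ Finset.range k, a j = 0 := by
    have h1 : ∑ j ∈ Finset.range (k * N), a j = 0 := blocks_sum_zero hblocks k
    have h2 : ∑ j ∈ Finset.range (N * k), a j = (N : ℤ) * ∑ j ∈ Finset.range k, a j :=
      periodic_sum_mul haper N
    rw [Nat.mul_comm] at h1
    rw [h1] at h2
    have hNne : (N : ℤ) ≠ 0 := Int.natCast_ne_zero.mpr (by omega)
    rcases mul_eq_zero.mp h2.symm with h | h
    · exact absurd h hNne
    · exact h
  have hgS : ∀ j, g j ∈ S := fun j => hiter_mem j s hs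
  have hOx : ∀ j, x (g j) = x s := by
    intro j
    induction j with
    | zero => rfl
    | succ j ihj =>
      have hsucc : g (j + 1) = P (g j) := Function.iterate_succ_apply' _ _ _
      rw [hsucc, hx (g j) (hgS j), ihj]
  have hOΩ : ∀ j, Ω (g j) = Ω s := by
    intro j
    induction j with
    | zero => rfl
    | succ j ihj =>
      have hsucc : g (j + 1) = P (g j) := Function.iterate_succ_apply' _ _ _
      rw [hsucc, hΩ (g j) (hgS j), ihj]
  -- the product over the orbit is 1
  have hOprod : ∏ t ∈ O, x t ^ ((γ ⬝ᵥ B.mulVec t) * Ω t) = 1 := by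
    rw [hO, Finset.prod_image ginj]
    calc ∏ j ∈ Finset.range k, x (g j) ^ ((γ ⬝ᵥ B.mulVec (g j)) * Ω (g j))
        = ∏ j ∈ Finset.range k, (x s ^ Ω s) ^ a j := by
          refine Finset.prod_congr rfl fun j _ => ?_
          rw [hOx j, hOΩ j]
          show x s ^ (a j * Ω s) = (x s ^ Ω s) ^ a j
          rw [mul_comm, _root_.zpow_mul]
      _ = (x s ^ Ω s) ^ (∑ j ∈ Finset.range k, a j) := zpow_sum_range _ a k
      _ = 1 := by rw [hsum0, zpow_zero]
  -- S \ O is stable under P with the same image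
  have hmaps' : ∀ t ∈ S \ O, P t ∈ S \ O := by
    intro t ht
    rw [Finset.mem_sdiff] at ht ⊢
    refine ⟨hmapsto t ht.1, fun hPtO => ?_⟩
    obtain ⟨j, hj, hgj⟩ := Finset.mem_image.mp hPtO
    rw [Finset.mem_range] at hj
    have hex2 : ∃ u, u ∈ O ∧ P u = P t := by
      rcases Nat.eq_zero_or_pos j with rfl | hj0
      · refine ⟨g (k - 1), Finset.mem_image.mpr ⟨k - 1, Finset.mem_range.mpr (by omega), rfl⟩, ?_⟩
        show P ((⇑P)^[k - 1] s) = P t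
        rw [(Function.iterate_succ_apply' (⇑P) (k - 1) s).symm,
          show (k - 1).succ = k by omega, hks]
        exact hgj
      · refine ⟨g (j - 1), Finset.mem_image.mpr ⟨j - 1, Finset.mem_range.mpr (by omega), rfl⟩, ?_⟩
        show P ((⇑P)^[j - 1] s) = P t
        rw [(Function.iterate_succ_apply' (⇑P) (j - 1) s).symm,
          show (j - 1).succ = j by omega]
        exact hgj
    obtain ⟨u, huO, hu⟩ := hex2
    have hut : u = t := hinj (hOsub huO) ht.1 hu
    exact ht.2 (hut ▸ huO)
  have himg' : (S \ O).image P = S \ O := by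
    apply Finset.eq_of_subset_of_card_le
    · intro t ht
      obtain ⟨u, hu, rfl⟩ := Finset.mem_image.mp ht
      exact hmaps' u hu
    · rw [Finset.card_image_of_injOn (hinj.mono (by
        intro t ht
        exact (Finset.mem_sdiff.mp ht).1))]
  have hss : S \ O ⊂ S := Finset.sdiff_ssubset hOsub ⟨s, hsO⟩
  have hrec := ih (S \ O) hss himg'
    (fun t ht => hΩ t (Finset.mem_sdiff.mp ht).1)
    (fun t ht => hx t (Finset.mem_sdiff.mp ht).1)
    (fun t ht => horb t (Finset.mem_sdiff.mp ht).1)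
  rw [← Finset.prod_sdiff hOsub, hrec, hOprod, one_mul]

/-- Multiplicative counterpart of the vanishing lemma of Theorem 3.1 (Remark 2 of the paper):
under the symmetry assumptions, the Kontsevich–Soibelman wall-crossing jump factor
`∏_{s ∈ S} x(s)^(⟨γ,s⟩·Ω(s))` is trivial, so the jump condition is trivially solved by
`X_γ = exp(Z_γ/z)`. -/
theorem stmt_2 (n : ℕ) (hn : 1 ≤ n) (B : Matrix (Fin n) (Fin n) ℤ)
    (hB : Bᵀ = -B)
    (P : (Fin n → ℤ) →ₗ[ℤ] (Fin n → ℤ)) (N : ℕ) (hN : 1 ≤ N)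
    (S : Finset (Fin n → ℤ)) (hS : S.image P = S)
    (Ω : (Fin n → ℤ) → ℤ) (hΩ : ∀ s ∈ S, Ω (P s) = Ω s)
    (x : (Fin n → ℤ) → ℂˣ) (hx : ∀ s ∈ S, x (P s) = x s)
    (horb : ∀ s ∈ S, ∀ γ : Fin n → ℤ,
      γ ⬝ᵥ B.mulVec (∑ j ∈ Finset.range N, (⇑P)^[j] s) = 0)
    (γ : Fin n → ℤ) :
    ∏ s ∈ S, (x s) ^ ((γ ⬝ᵥ B.mulVec s) * Ω s) = 1 :=
  aux B P N hN Ω x γ S hS hΩ hx (fun s hs => horb s hs γ)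
end

section
/- Let B be the 8×8 antisymmetric integer matrix of the local dP₅ BPS quiver, defined by B_{ij} = 1 if (i,j) ∈ {3,4}×{1,2} ∪ {5,6}×{3,4} ∪ {7,8}×{5,6} ∪ {1,2}×{7,8}, B_{ij} = −1 if (j,i) lies in that set, and B_{ij} = 0 otherwise (indices 1 ≤ i,j ≤ 8). Then the six vectors α₀ = e₂−e₁, α₁ = e₆−e₅, α₂ = e₁+e₅, α₃ = e₃+e₇, α₄ = e₄−e₃, α₅ = e₈−e₇ of ℤ⁸ all satisfy B·α = 0, they are linearly independent over ℚ, and they form a basis of the kernel of B regarded as a linear map on ℚ⁸ (equivalently, B has rank 2 and its kernel has dimension 6). -/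
open Matrix

/-- The antisymmetrized adjacency matrix (Dirac pairing) of the BPS quiver of local dP₅:
`B i j = 1` iff `(i,j) ∈ {3,4}×{1,2} ∪ {5,6}×{3,4} ∪ {7,8}×{5,6} ∪ {1,2}×{7,8}` (1-indexed),
`-1` for the transposed pairs, `0` otherwise. -/
def BdP5 : Matrix (Fin 8) (Fin 8) ℤ :=
  !![0, 0, -1, -1, 0, 0, 1, 1;
     0, 0, -1, -1, 0, 0, 1, 1;
     1, 1, 0, 0, -1, -1, 0, 0;
     1, 1, 0, 0, -1, -1, 0, 0;
     0, 0, 1, 1, 0, 0, -1, -1;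
     0, 0, 1, 1, 0, 0, -1, -1;
     -1, -1, 0, 0, 1, 1, 0, 0;
     -1, -1, 0, 0, 1, 1, 0, 0]

/-- The simple roots `α₀ = e₂-e₁, α₁ = e₆-e₅, α₂ = e₁+e₅, α₃ = e₃+e₇, α₄ = e₄-e₃,
α₅ = e₈-e₇` of `D₅⁽¹⁾` inside `ℤ⁸` (1-indexed standard basis). -/
def alphaDP5 : Fin 6 → (Fin 8 → ℤ) :=
  ![![-1, 1, 0, 0, 0, 0, 0, 0],
    ![0, 0, 0, 0, -1, 1, 0, 0],
    ![1, 0, 0, 0, 1, 0, 0, 0],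
    ![0, 0, 1, 0, 0, 0, 1, 0],
    ![0, 0, -1, 1, 0, 0, 0, 0],
    ![0, 0, 0, 0, 0, 0, -1, 1]]

/-- The same vectors regarded in `ℚ⁸`. -/
def alphaDP5Q : Fin 6 → (Fin 8 → ℚ) := fun i j => (alphaDP5 i j : ℚ)

lemma aQ_0_0 : alphaDP5Q 0 0 = -1 := by decide
lemma aQ_0_1 : alphaDP5Q 0 1 = 1 := by decide
lemma aQ_0_2 : alphaDP5Q 0 2 = 0 := by decide
lemma aQ_0_3 : alphaDP5Q 0 3 = 0 := by decide
lemma aQ_0_4 : alphaDP5Q 0 4 = 0 := by decide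
lemma aQ_0_5 : alphaDP5Q 0 5 = 0 := by decide
lemma aQ_0_6 : alphaDP5Q 0 6 = 0 := by decide
lemma aQ_0_7 : alphaDP5Q 0 7 = 0 := by decide
lemma aQ_1_0 : alphaDP5Q 1 0 = 0 := by decide
lemma aQ_1_1 : alphaDP5Q 1 1 = 0 := by decide
lemma aQ_1_2 : alphaDP5Q 1 2 = 0 := by decide
lemma aQ_1_3 : alphaDP5Q 1 3 = 0 := by decide
lemma aQ_1_4 : alphaDP5Q 1 4 = -1 := by decide
lemma aQ_1_5 : alphaDP5Q 1 5 = 1 := by decide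
lemma aQ_1_6 : alphaDP5Q 1 6 = 0 := by decide
lemma aQ_1_7 : alphaDP5Q 1 7 = 0 := by decide
lemma aQ_2_0 : alphaDP5Q 2 0 = 1 := by decide
lemma aQ_2_1 : alphaDP5Q 2 1 = 0 := by decide
lemma aQ_2_2 : alphaDP5Q 2 2 = 0 := by decide
lemma aQ_2_3 : alphaDP5Q 2 3 = 0 := by decide
lemma aQ_2_4 : alphaDP5Q 2 4 = 1 := by decide
lemma aQ_2_5 : alphaDP5Q 2 5 = 0 := by decide
lemma aQ_2_6 : alphaDP5Q 2 6 = 0 := by decide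
lemma aQ_2_7 : alphaDP5Q 2 7 = 0 := by decide
lemma aQ_3_0 : alphaDP5Q 3 0 = 0 := by decide
lemma aQ_3_1 : alphaDP5Q 3 1 = 0 := by decide
lemma aQ_3_2 : alphaDP5Q 3 2 = 1 := by decide
lemma aQ_3_3 : alphaDP5Q 3 3 = 0 := by decide
lemma aQ_3_4 : alphaDP5Q 3 4 = 0 := by decide
lemma aQ_3_5 : alphaDP5Q 3 5 = 0 := by decide
lemma aQ_3_6 : alphaDP5Q 3 6 = 1 := by decide
lemma aQ_3_7 : alphaDP5Q 3 7 = 0 := by decide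
lemma aQ_4_0 : alphaDP5Q 4 0 = 0 := by decide
lemma aQ_4_1 : alphaDP5Q 4 1 = 0 := by decide
lemma aQ_4_2 : alphaDP5Q 4 2 = -1 := by decide
lemma aQ_4_3 : alphaDP5Q 4 3 = 1 := by decide
lemma aQ_4_4 : alphaDP5Q 4 4 = 0 := by decide
lemma aQ_4_5 : alphaDP5Q 4 5 = 0 := by decide
lemma aQ_4_6 : alphaDP5Q 4 6 = 0 := by decide
lemma aQ_4_7 : alphaDP5Q 4 7 = 0 := by decide
lemma aQ_5_0 : alphaDP5Q 5 0 = 0 := by decide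
lemma aQ_5_1 : alphaDP5Q 5 1 = 0 := by decide
lemma aQ_5_2 : alphaDP5Q 5 2 = 0 := by decide
lemma aQ_5_3 : alphaDP5Q 5 3 = 0 := by decide
lemma aQ_5_4 : alphaDP5Q 5 4 = 0 := by decide
lemma aQ_5_5 : alphaDP5Q 5 5 = 0 := by decide
lemma aQ_5_6 : alphaDP5Q 5 6 = -1 := by decide
lemma aQ_5_7 : alphaDP5Q 5 7 = 1 := by decide
lemma bQ_0_0 : BdP5.map (Int.cast : ℤ → ℚ) 0 0 = 0 := by decide
lemma bQ_0_1 : BdP5.map (Int.cast : ℤ → ℚ) 0 1 = 0 := by decide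
lemma bQ_0_2 : BdP5.map (Int.cast : ℤ → ℚ) 0 2 = -1 := by decide
lemma bQ_0_3 : BdP5.map (Int.cast : ℤ → ℚ) 0 3 = -1 := by decide
lemma bQ_0_4 : BdP5.map (Int.cast : ℤ → ℚ) 0 4 = 0 := by decide
lemma bQ_0_5 : BdP5.map (Int.cast : ℤ → ℚ) 0 5 = 0 := by decide
lemma bQ_0_6 : BdP5.map (Int.cast : ℤ → ℚ) 0 6 = 1 := by decide
lemma bQ_0_7 : BdP5.map (Int.cast : ℤ → ℚ) 0 7 = 1 := by decide
lemma bQ_2_0 : BdP5.map (Int.cast : ℤ → ℚ) 2 0 = 1 := by decide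
lemma bQ_2_1 : BdP5.map (Int.cast : ℤ → ℚ) 2 1 = 1 := by decide
lemma bQ_2_2 : BdP5.map (Int.cast : ℤ → ℚ) 2 2 = 0 := by decide
lemma bQ_2_3 : BdP5.map (Int.cast : ℤ → ℚ) 2 3 = 0 := by decide
lemma bQ_2_4 : BdP5.map (Int.cast : ℤ → ℚ) 2 4 = -1 := by decide
lemma bQ_2_5 : BdP5.map (Int.cast : ℤ → ℚ) 2 5 = -1 := by decide
lemma bQ_2_6 : BdP5.map (Int.cast : ℤ → ℚ) 2 6 = 0 := by decide
lemma bQ_2_7 : BdP5.map (Int.cast : ℤ → ℚ) 2 7 = 0 := by decide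
lemma vec6_0 (a b c d e f : ℚ) : ![a,b,c,d,e,f] (0 : Fin 6) = a := rfl
lemma vec6_1 (a b c d e f : ℚ) : ![a,b,c,d,e,f] (1 : Fin 6) = b := rfl
lemma vec6_2 (a b c d e f : ℚ) : ![a,b,c,d,e,f] (2 : Fin 6) = c := rfl
lemma vec6_3 (a b c d e f : ℚ) : ![a,b,c,d,e,f] (3 : Fin 6) = d := rfl
lemma vec6_4 (a b c d e f : ℚ) : ![a,b,c,d,e,f] (4 : Fin 6) = e := rfl
lemma vec6_5 (a b c d e f : ℚ) : ![a,b,c,d,e,f] (5 : Fin 6) = f := rfl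

/-- The vectors α₀,…,α₅ are annihilated by `B`, are linearly independent over `ℚ`, and form a
basis of the kernel of `B` as a linear map on `ℚ⁸`. -/
theorem stmt_3 :
    (∀ i : Fin 6, BdP5.mulVec (alphaDP5 i) = 0) ∧
    LinearIndependent ℚ alphaDP5Q ∧
    Submodule.span ℚ (Set.range alphaDP5Q) =
      LinearMap.ker (Matrix.mulVecLin (BdP5.map (Int.cast : ℤ → ℚ))) := by
  have hann : ∀ i : Fin 6, BdP5.mulVec (alphaDP5 i) = 0 := by decide
  refine ⟨hann, ?_, ?_⟩
  · rw [Fintype.linearIndependent_iff]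
    intro g hg i
    have h1 := congrFun hg 0; have h2 := congrFun hg 1
    have h3 := congrFun hg 2; have h4 := congrFun hg 3
    have h5 := congrFun hg 4; have h6 := congrFun hg 5
    have h7 := congrFun hg 6; have h8 := congrFun hg 7
    simp only [Fin.sum_univ_six, Pi.add_apply, Pi.smul_apply, smul_eq_mul,
      Pi.zero_apply, aQ_0_0, aQ_0_1, aQ_0_2, aQ_0_3, aQ_0_4, aQ_0_5, aQ_0_6, aQ_0_7, aQ_1_0, aQ_1_1, aQ_1_2, aQ_1_3, aQ_1_4, aQ_1_5, aQ_1_6, aQ_1_7, aQ_2_0, aQ_2_1, aQ_2_2, aQ_2_3, aQ_2_4, aQ_2_5, aQ_2_6, aQ_2_7, aQ_3_0, aQ_3_1, aQ_3_2, aQ_3_3, aQ_3_4, aQ_3_5, aQ_3_6, aQ_3_7, aQ_4_0, aQ_4_1, aQ_4_2, aQ_4_3, aQ_4_4, aQ_4_5, aQ_4_6, aQ_4_7, aQ_5_0, aQ_5_1, aQ_5_2, aQ_5_3, aQ_5_4, aQ_5_5, aQ_5_6, aQ_5_7] at h1 h2 h3 h4 h5 h6 h7 h8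
    fin_cases i
    · show g 0 = 0; linarith
    · show g 1 = 0; linarith
    · show g 2 = 0; linarith
    · show g 3 = 0; linarith
    · show g 4 = 0; linarith
    · show g 5 = 0; linarith
  · apply le_antisymm
    · rw [Submodule.span_le]
      rintro _ ⟨i, rfl⟩
      simp only [SetLike.mem_coe, LinearMap.mem_ker, mulVecLin_apply]
      have hrw : alphaDP5Q i = Int.cast ∘ alphaDP5 i := rfl
      rw [hrw]
      funext j
      show (BdP5.map ⇑(Int.castRingHom ℚ) *ᵥ ⇑(Int.castRingHom ℚ) ∘ alphaDP5 i) j = (0 : Fin 8 → ℚ) j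
      rw [← RingHom.map_mulVec (Int.castRingHom ℚ)]
      simp [hann i]
    · intro x hx
      simp only [LinearMap.mem_ker, mulVecLin_apply] at hx
      have e1 := congrFun hx 0
      have e2 := congrFun hx 2
      simp only [mulVec, dotProduct, Fin.sum_univ_eight, Pi.zero_apply,
        bQ_0_0, bQ_0_1, bQ_0_2, bQ_0_3, bQ_0_4, bQ_0_5, bQ_0_6, bQ_0_7, bQ_2_0, bQ_2_1, bQ_2_2, bQ_2_3, bQ_2_4, bQ_2_5, bQ_2_6, bQ_2_7] at e1 e2
      rw [Submodule.mem_span_range_iff_exists_fun]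
      refine ⟨![x 1, x 5, x 0 + x 1, x 2 + x 3, x 3, x 7], ?_⟩
      funext j
      simp only [Fin.sum_univ_six, Pi.add_apply, Pi.smul_apply, smul_eq_mul, vec6_0, vec6_1, vec6_2, vec6_3, vec6_4, vec6_5]
      fin_cases j
      · show x 1 * alphaDP5Q 0 0 + x 5 * alphaDP5Q 1 0 + (x 0 + x 1) * alphaDP5Q 2 0 + (x 2 + x 3) * alphaDP5Q 3 0 + x 3 * alphaDP5Q 4 0 + x 7 * alphaDP5Q 5 0 = x 0
        simp only [aQ_0_0, aQ_0_1, aQ_0_2, aQ_0_3, aQ_0_4, aQ_0_5, aQ_0_6, aQ_0_7, aQ_1_0, aQ_1_1, aQ_1_2, aQ_1_3, aQ_1_4, aQ_1_5, aQ_1_6, aQ_1_7, aQ_2_0, aQ_2_1, aQ_2_2, aQ_2_3, aQ_2_4, aQ_2_5, aQ_2_6, aQ_2_7, aQ_3_0, aQ_3_1, aQ_3_2, aQ_3_3, aQ_3_4, aQ_3_5, aQ_3_6, aQ_3_7, aQ_4_0, aQ_4_1, aQ_4_2, aQ_4_3, aQ_4_4, aQ_4_5, aQ_4_6, aQ_4_7,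 aQ_5_0, aQ_5_1, aQ_5_2, aQ_5_3, aQ_5_4, aQ_5_5, aQ_5_6, aQ_5_7]; linarith
      · show x 1 * alphaDP5Q 0 1 + x 5 * alphaDP5Q 1 1 + (x 0 + x 1) * alphaDP5Q 2 1 + (x 2 + x 3) * alphaDP5Q 3 1 + x 3 * alphaDP5Q 4 1 + x 7 * alphaDP5Q 5 1 = x 1
        simp only [aQ_0_0, aQ_0_1, aQ_0_2, aQ_0_3, aQ_0_4, aQ_0_5, aQ_0_6, aQ_0_7, aQ_1_0, aQ_1_1, aQ_1_2, aQ_1_3, aQ_1_4, aQ_1_5, aQ_1_6, aQ_1_7, aQ_2_0, aQ_2_1, aQ_2_2, aQ_2_3, aQ_2_4, aQ_2_5, aQ_2_6, aQ_2_7, aQ_3_0, aQ_3_1, aQ_3_2, aQ_3_3, aQ_3_4, aQ_3_5, aQ_3_6, aQ_3_7, aQ_4_0, aQ_4_1, aQ_4_2, aQ_4_3, aQ_4_4, aQ_4_5, aQ_4_6, aQ_4_7, aQ_5_0, aQ_5_1, aQ_5_2, aQ_5_3, aQ_5_4, aQ_5_5, aQ_5_6, aQ_5_7]; linarith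
      · show x 1 * alphaDP5Q 0 2 + x 5 * alphaDP5Q 1 2 + (x 0 + x 1) * alphaDP5Q 2 2 + (x 2 + x 3) * alphaDP5Q 3 2 + x 3 * alphaDP5Q 4 2 + x 7 * alphaDP5Q 5 2 = x 2
        simp only [aQ_0_0, aQ_0_1, aQ_0_2, aQ_0_3, aQ_0_4, aQ_0_5, aQ_0_6, aQ_0_7, aQ_1_0, aQ_1_1, aQ_1_2, aQ_1_3, aQ_1_4, aQ_1_5, aQ_1_6, aQ_1_7, aQ_2_0, aQ_2_1, aQ_2_2, aQ_2_3, aQ_2_4, aQ_2_5, aQ_2_6, aQ_2_7, aQ_3_0, aQ_3_1, aQ_3_2, aQ_3_3, aQ_3_4, aQ_3_5, aQ_3_6, aQ_3_7, aQ_4_0, aQ_4_1, aQ_4_2, aQ_4_3, aQ_4_4, aQ_4_5, aQ_4_6, aQ_4_7, aQ_5_0, aQ_5_1, aQ_5_2, aQ_5_3, aQ_5_4, aQ_5_5, aQ_5_6, aQ_5_7]; linarith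
      · show x 1 * alphaDP5Q 0 3 + x 5 * alphaDP5Q 1 3 + (x 0 + x 1) * alphaDP5Q 2 3 + (x 2 + x 3) * alphaDP5Q 3 3 + x 3 * alphaDP5Q 4 3 + x 7 * alphaDP5Q 5 3 = x 3
        simp only [aQ_0_0, aQ_0_1, aQ_0_2, aQ_0_3, aQ_0_4, aQ_0_5, aQ_0_6, aQ_0_7, aQ_1_0, aQ_1_1, aQ_1_2, aQ_1_3, aQ_1_4, aQ_1_5, aQ_1_6, aQ_1_7, aQ_2_0, aQ_2_1, aQ_2_2, aQ_2_3, aQ_2_4, aQ_2_5, aQ_2_6, aQ_2_7, aQ_3_0, aQ_3_1, aQ_3_2, aQ_3_3, aQ_3_4, aQ_3_5, aQ_3_6, aQ_3_7, aQ_4_0, aQ_4_1, aQ_4_2, aQ_4_3, aQ_4_4, aQ_4_5, aQ_4_6, aQ_4_7, aQ_5_0, aQ_5_1, aQ_5_2, aQ_5_3, aQ_5_4, aQ_5_5, aQ_5_6, aQ_5_7]; linarith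
      · show x 1 * alphaDP5Q 0 4 + x 5 * alphaDP5Q 1 4 + (x 0 + x 1) * alphaDP5Q 2 4 + (x 2 + x 3) * alphaDP5Q 3 4 + x 3 * alphaDP5Q 4 4 + x 7 * alphaDP5Q 5 4 = x 4
        simp only [aQ_0_0, aQ_0_1, aQ_0_2, aQ_0_3, aQ_0_4, aQ_0_5, aQ_0_6, aQ_0_7, aQ_1_0, aQ_1_1, aQ_1_2, aQ_1_3, aQ_1_4, aQ_1_5, aQ_1_6, aQ_1_7, aQ_2_0, aQ_2_1, aQ_2_2, aQ_2_3, aQ_2_4, aQ_2_5, aQ_2_6, aQ_2_7, aQ_3_0, aQ_3_1, aQ_3_2, aQ_3_3, aQ_3_4, aQ_3_5, aQ_3_6, aQ_3_7, aQ_4_0, aQ_4_1, aQ_4_2, aQ_4_3, aQ_4_4, aQ_4_5, aQ_4_6, aQ_4_7, aQ_5_0, aQ_5_1, aQ_5_2, aQ_5_3, aQ_5_4, aQ_5_5, aQ_5_6, aQ_5_7]; linarith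
      · show x 1 * alphaDP5Q 0 5 + x 5 * alphaDP5Q 1 5 + (x 0 + x 1) * alphaDP5Q 2 5 + (x 2 + x 3) * alphaDP5Q 3 5 + x 3 * alphaDP5Q 4 5 + x 7 * alphaDP5Q 5 5 = x 5
        simp only [aQ_0_0, aQ_0_1, aQ_0_2, aQ_0_3, aQ_0_4, aQ_0_5, aQ_0_6, aQ_0_7, aQ_1_0, aQ_1_1, aQ_1_2, aQ_1_3, aQ_1_4, aQ_1_5, aQ_1_6, aQ_1_7, aQ_2_0, aQ_2_1, aQ_2_2, aQ_2_3, aQ_2_4, aQ_2_5, aQ_2_6, aQ_2_7, aQ_3_0, aQ_3_1, aQ_3_2, aQ_3_3, aQ_3_4, aQ_3_5, aQ_3_6, aQ_3_7, aQ_4_0, aQ_4_1, aQ_4_2, aQ_4_3, aQ_4_4, aQ_4_5, aQ_4_6, aQ_4_7, aQ_5_0, aQ_5_1, aQ_5_2, aQ_5_3, aQ_5_4, aQ_5_5, aQ_5_6, aQ_5_7]; linarith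
      · show x 1 * alphaDP5Q 0 6 + x 5 * alphaDP5Q 1 6 + (x 0 + x 1) * alphaDP5Q 2 6 + (x 2 + x 3) * alphaDP5Q 3 6 + x 3 * alphaDP5Q 4 6 + x 7 * alphaDP5Q 5 6 = x 6
        simp only [aQ_0_0, aQ_0_1, aQ_0_2, aQ_0_3, aQ_0_4, aQ_0_5, aQ_0_6, aQ_0_7, aQ_1_0, aQ_1_1, aQ_1_2, aQ_1_3, aQ_1_4, aQ_1_5, aQ_1_6, aQ_1_7, aQ_2_0, aQ_2_1, aQ_2_2, aQ_2_3, aQ_2_4, aQ_2_5, aQ_2_6, aQ_2_7, aQ_3_0, aQ_3_1, aQ_3_2, aQ_3_3, aQ_3_4, aQ_3_5, aQ_3_6, aQ_3_7, aQ_4_0, aQ_4_1, aQ_4_2, aQ_4_3, aQ_4_4, aQ_4_5, aQ_4_6, aQ_4_7, aQ_5_0, aQ_5_1, aQ_5_2, aQ_5_3, aQ_5_4, aQ_5_5, aQ_5_6, aQ_5_7]; linarith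
      · show x 1 * alphaDP5Q 0 7 + x 5 * alphaDP5Q 1 7 + (x 0 + x 1) * alphaDP5Q 2 7 + (x 2 + x 3) * alphaDP5Q 3 7 + x 3 * alphaDP5Q 4 7 + x 7 * alphaDP5Q 5 7 = x 7
        simp only [aQ_0_0, aQ_0_1, aQ_0_2, aQ_0_3, aQ_0_4, aQ_0_5, aQ_0_6, aQ_0_7, aQ_1_0, aQ_1_1, aQ_1_2, aQ_1_3, aQ_1_4, aQ_1_5, aQ_1_6, aQ_1_7, aQ_2_0, aQ_2_1, aQ_2_2, aQ_2_3, aQ_2_4, aQ_2_5, aQ_2_6, aQ_2_7, aQ_3_0, aQ_3_1, aQ_3_2, aQ_3_3, aQ_3_4, aQ_3_5, aQ_3_6, aQ_3_7, aQ_4_0, aQ_4_1, aQ_4_2, aQ_4_3, aQ_4_4, aQ_4_5, aQ_4_6, aQ_4_7, aQ_5_0, aQ_5_1, aQ_5_2, aQ_5_3, aQ_5_4, aQ_5_5, aQ_5_6, aQ_5_7]; linarith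
end

section
/- Define mutation of a pair (B, c), where B is an n×n antisymmetric integer matrix and c = (c₁,…,c_n) is a tuple of vectors of ℤⁿ, at a node k by: B ↦ μ_k(B) with μ_k(B)_{ij} = −B_{ij} if i = k or j = k and μ_k(B)_{ij} = B_{ij} + (B_{ik}|B_{kj}| + |B_{ik}|B_{kj})/2 otherwise; and c ↦ μ_k(c) with μ_k(c)_k = −c_k and μ_k(c)_j = c_j + max(B_{jk},0)·c_k for j ≠ k (using the matrix B current at the time of the mutation). Let B⁰ be the 8×8 matrix with B⁰_{ij} = 1 if (i,j) ∈ {3,4}×{1,2} ∪ {5,6}×{3,4} ∪ {7,8}×{5,6} ∪ {1,2}×{7,8}, B⁰_{ij} = −1 if (j,i) lies in that set, and 0 otherwise. Starting from (B⁰, (e₁,…,e₈)) apply the mutations μ₅, μ₁, μ₆, μ₂, μ₇, μ₃, μ₈, μ₄ successively in this order, and then relabel the nodes by the permutation ρ = (1 2)(3 4)(5 6)(7 8), i.e. pass to B''_{ij} = B_{ρ(i)ρ(j)} and c''_i = c_{ρ(i)}. Then B'' = B⁰ and, with v₁ = e₁+e₂+e₃+e₄ and v₂ = e₅+e₆+e₇+e₈,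 c'' = (e₁+v₁, e₂+v₁, e₃−v₁, e₄−v₁, e₅+v₂, e₆+v₂, e₇−v₂, e₈−v₂). Consequently, the induced ℤ-linear map T₁ : ℤ⁸ → ℤ⁸ determined by e_i ↦ c''_i satisfies, for every n ≥ 0: T₁ⁿ(e_i) = e_i + n·v₁ for i ∈ {1,2}, T₁ⁿ(e_i) = e_i − n·v₁ for i ∈ {3,4}, T₁ⁿ(e_i) = e_i + n·v₂ for i ∈ {5,6}, and T₁ⁿ(e_i) = e_i − n·v₂ for i ∈ {7,8}. -/
open Matrix

/-- Quiver (matrix) mutation at node `k`: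
`μ_k(B)_{ij} = -B_{ij}` if `i = k` or `j = k`, and
`μ_k(B)_{ij} = B_{ij} + (B_{ik}|B_{kj}| + |B_{ik}|B_{kj})/2` otherwise. -/
def mutB {n : ℕ} (B : Matrix (Fin n) (Fin n) ℤ) (k : Fin n) : Matrix (Fin n) (Fin n) ℤ :=
  fun i j => if i = k ∨ j = k then -B i j
    else B i j + (B i k * |B k j| + |B i k| * B k j) / 2

/-- Charge mutation at node `k`: `μ_k(c)_k = -c_k` and
`μ_k(c)_j = c_j + max(B_{jk},0)·c_k` for `j ≠ k`. -/
def mutC {n : ℕ} (B : Matrix (Fin n) (Fin n) ℤ) (c : Fin n → (Fin n → ℤ)) (k : Fin n) :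
    Fin n → (Fin n → ℤ) :=
  fun j => if j = k then -c k else c j + (max (B j k) 0) • c k

/-- One mutation step on a pair (matrix, charges). -/
def mutStep {n : ℕ} (p : Matrix (Fin n) (Fin n) ℤ × (Fin n → (Fin n → ℤ))) (k : Fin n) :
    Matrix (Fin n) (Fin n) ℤ × (Fin n → (Fin n → ℤ)) :=
  (mutB p.1 k, mutC p.1 p.2 k)

/-- The antisymmetrized adjacency matrix of the local dP₅ BPS quiver. -/
def B0dP5 : Matrix (Fin 8) (Fin 8) ℤ :=
  !![0, 0, -1, -1, 0, 0, 1, 1;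
     0, 0, -1, -1, 0, 0, 1, 1;
     1, 1, 0, 0, -1, -1, 0, 0;
     1, 1, 0, 0, -1, -1, 0, 0;
     0, 0, 1, 1, 0, 0, -1, -1;
     0, 0, 1, 1, 0, 0, -1, -1;
     -1, -1, 0, 0, 1, 1, 0, 0;
     -1, -1, 0, 0, 1, 1, 0, 0]

/-- Standard basis of `ℤ⁸`. -/
def e8 : Fin 8 → (Fin 8 → ℤ) := fun i => Pi.single i 1

/-- The mutation sequence μ₅, μ₁, μ₆, μ₂, μ₇, μ₃, μ₈, μ₄ (0-indexed nodes). -/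
def muSeqDP5 : List (Fin 8) := [4, 0, 5, 1, 6, 2, 7, 3]

/-- Result of applying the mutation sequence to `(B⁰, (e₁,…,e₈))`. -/
def resDP5 : Matrix (Fin 8) (Fin 8) ℤ × (Fin 8 → (Fin 8 → ℤ)) :=
  muSeqDP5.foldl mutStep (B0dP5, e8)

/-- The relabelling permutation ρ = (1 2)(3 4)(5 6)(7 8), 0-indexed. -/
def ρdP5 : Fin 8 → Fin 8 := ![1, 0, 3, 2, 5, 4, 7, 6]

def v1dP5 : Fin 8 → ℤ := e8 0 + e8 1 + e8 2 + e8 3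
def v2dP5 : Fin 8 → ℤ := e8 4 + e8 5 + e8 6 + e8 7

/-- Target charge vectors `c'' = (e₁+v₁, e₂+v₁, e₃−v₁, e₄−v₁, e₅+v₂, e₆+v₂, e₇−v₂, e₈−v₂)`. -/
def cTargetDP5 : Fin 8 → (Fin 8 → ℤ) :=
  ![e8 0 + v1dP5, e8 1 + v1dP5, e8 2 - v1dP5, e8 3 - v1dP5,
    e8 4 + v2dP5, e8 5 + v2dP5, e8 6 - v2dP5, e8 7 - v2dP5]


section
variable {M : Type*} [AddCommGroup M] [Module ℤ M]

private lemma iter_add_aux (T : M →ₗ[ℤ] M) (x v : M) (hv : T v = v) (hx : T x = x + v) :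
    ∀ n : ℕ, (⇑T)^[n] x = x + n • v := by
  intro n; induction n with
  | zero => simp
  | succ n ih =>
    rw [Function.iterate_succ_apply', ih, map_add, map_nsmul, hv, hx, succ_nsmul]
    abel

private lemma iter_sub_aux (T : M →ₗ[ℤ] M) (x v : M) (hv : T v = v) (hx : T x = x - v) :
    ∀ n : ℕ, (⇑T)^[n] x = x - n • v := by
  intro n; induction n with
  | zero => simp
  | succ n ih =>
    rw [Function.iterate_succ_apply', ih, map_sub, map_nsmul, hv, hx, succ_nsmul]
    abel
end

/-- The q-Painlevé VI time evolution T₁ of local dP₅: the composite of the eight mutations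
followed by the relabelling ρ preserves the quiver, acts on the charges as claimed, and its
iterates shift the charges by multiples of `v₁`, `v₂`. -/
theorem stmt_4 :
    (∀ i j, resDP5.1 (ρdP5 i) (ρdP5 j) = B0dP5 i j) ∧
    (∀ i, resDP5.2 (ρdP5 i) = cTargetDP5 i) ∧
    (∀ T : (Fin 8 → ℤ) →ₗ[ℤ] (Fin 8 → ℤ),
      (∀ i, T (e8 i) = resDP5.2 (ρdP5 i)) →
      ∀ n : ℕ,
        (⇑T)^[n] (e8 0) = e8 0 + n • v1dP5 ∧
        (⇑T)^[n] (e8 1) = e8 1 + n • v1dP5 ∧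
        (⇑T)^[n] (e8 2) = e8 2 - n • v1dP5 ∧
        (⇑T)^[n] (e8 3) = e8 3 - n • v1dP5 ∧
        (⇑T)^[n] (e8 4) = e8 4 + n • v2dP5 ∧
        (⇑T)^[n] (e8 5) = e8 5 + n • v2dP5 ∧
        (⇑T)^[n] (e8 6) = e8 6 - n • v2dP5 ∧
        (⇑T)^[n] (e8 7) = e8 7 - n • v2dP5) := by
  have h1 : (∀ i j, resDP5.1 (ρdP5 i) (ρdP5 j) = B0dP5 i j) := by
    letI : ∀ i j : Fin 8, Decidable (resDP5.1 (ρdP5 i) (ρdP5 j) = B0dP5 i j) := fun _ _ => inferInstance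
    decide
  have h2 : (∀ i, resDP5.2 (ρdP5 i) = cTargetDP5 i) := by decide
  refine ⟨h1, h2, ?_⟩
  intro T hT n
  have hT' : ∀ i, T (e8 i) = cTargetDP5 i := fun i => (hT i).trans (h2 i)
  have h0 : T (e8 0) = e8 0 + v1dP5 := hT' 0
  have h1' : T (e8 1) = e8 1 + v1dP5 := hT' 1
  have h2' : T (e8 2) = e8 2 - v1dP5 := hT' 2
  have h3 : T (e8 3) = e8 3 - v1dP5 := hT' 3
  have h4 : T (e8 4) = e8 4 + v2dP5 := hT' 4
  have h5 : T (e8 5) = e8 5 + v2dP5 := hT' 5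
  have h6 : T (e8 6) = e8 6 - v2dP5 := hT' 6
  have h7 : T (e8 7) = e8 7 - v2dP5 := hT' 7
  have hv1 : T v1dP5 = v1dP5 := by
    have : v1dP5 = e8 0 + e8 1 + e8 2 + e8 3 := rfl
    rw [this, map_add, map_add, map_add, h0, h1', h2', h3]; abel
  have hv2 : T v2dP5 = v2dP5 := by
    have : v2dP5 = e8 4 + e8 5 + e8 6 + e8 7 := rfl
    rw [this, map_add, map_add, map_add, h4, h5, h6, h7]; abel
  exact ⟨iter_add_aux T _ _ hv1 h0 n, iter_add_aux T _ _ hv1 h1' n,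
    iter_sub_aux T _ _ hv1 h2' n, iter_sub_aux T _ _ hv1 h3 n,
    iter_add_aux T _ _ hv2 h4 n, iter_add_aux T _ _ hv2 h5 n,
    iter_sub_aux T _ _ hv2 h6 n, iter_sub_aux T _ _ hv2 h7 n⟩
end

section
/- Let C be the D₅^{(1)} affine Cartan matrix, the 6×6 integer matrix (rows and columns indexed by 0,…,5) [[2,0,−1,0,0,0],[0,2,−1,0,0,0],[−1,−1,2,−1,0,0],[0,0,−1,2,−1,−1],[0,0,0,−1,2,0],[0,0,0,−1,0,2]]. In ℤ⁶ with standard basis e₀,…,e₅, define the five vectors β₀ = e₂+e₃, β₁ = e₀, β₂ = e₁+e₂, β₃ = e₃+e₅, β₄ = e₄. Then the Gram matrix of these vectors with respect to the bilinear form given by C equals the A₄^{(1)} affine Cartan matrix: βᵢᵀ C βⱼ = C'_{ij} for all 0 ≤ i,j ≤ 4, where C' = [[2,−1,0,0,−1],[−1,2,−1,0,0],[0,−1,2,−1,0],[0,0,−1,2,−1],[−1,0,0,−1,2]]. -/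
open Matrix

/-- The `D₅⁽¹⁾` affine Cartan matrix. -/
def CartanD5 : Matrix (Fin 6) (Fin 6) ℤ :=
  !![2, 0, -1, 0, 0, 0;
     0, 2, -1, 0, 0, 0;
     -1, -1, 2, -1, 0, 0;
     0, 0, -1, 2, -1, -1;
     0, 0, 0, -1, 2, 0;
     0, 0, 0, -1, 0, 2]

/-- The `A₄⁽¹⁾` affine Cartan matrix. -/
def CartanA4 : Matrix (Fin 5) (Fin 5) ℤ :=
  !![2, -1, 0, 0, -1;
     -1, 2, -1, 0, 0;
     0, -1, 2, -1, 0;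
     0, 0, -1, 2, -1;
     -1, 0, 0, -1, 2]

/-- The vectors β₀ = e₂+e₃, β₁ = e₀, β₂ = e₁+e₂, β₃ = e₃+e₅, β₄ = e₄ in ℤ⁶
(indices 0,…,5). -/
def betaDP4 : Fin 5 → (Fin 6 → ℤ) :=
  ![![0, 0, 1, 1, 0, 0],
    ![1, 0, 0, 0, 0, 0],
    ![0, 1, 1, 0, 0, 0],
    ![0, 0, 0, 1, 0, 1],
    ![0, 0, 0, 0, 1, 0]]

/-- Decoupling from local dP₅ to local dP₄: the Gram matrix of the vectors β₀,…,β₄ with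
respect to the `D₅⁽¹⁾` Cartan form is the `A₄⁽¹⁾` Cartan matrix. -/
theorem stmt_6 :
    ∀ i j : Fin 5, betaDP4 i ⬝ᵥ CartanD5.mulVec (betaDP4 j) = CartanA4 i j := by
  intro i j; fin_cases i <;> fin_cases j <;> decide
end

section
/- Let C be the A₄^{(1)} affine Cartan matrix, the 5×5 integer matrix (rows and columns indexed by 0,…,4) [[2,−1,0,0,−1],[−1,2,−1,0,0],[0,−1,2,−1,0],[0,0,−1,2,−1],[−1,0,0,−1,2]]. In ℤ⁵ with standard basis e₀,…,e₄, define the five vectors a₀ = e₃+e₄, a₁ = e₁+e₂, a₂ = e₀, b₀ = e₂+e₃, b₁ = e₀+e₁+e₄. Then the Gram matrix of (a₀,a₁,a₂,b₀,b₁) with respect to the bilinear form given by C equals the (A₂+A₁)^{(1)} Cartan matrix [[2,−1,−1,0,0],[−1,2,−1,0,0],[−1,−1,2,0,0],[0,0,0,2,−2],[0,0,0,−2,2]]; in particular the a's are orthogonal to the b's. -/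
open Matrix

/-- The `(A₂+A₁)⁽¹⁾` Cartan matrix. -/
def CartanA2A1 : Matrix (Fin 5) (Fin 5) ℤ :=
  !![2, -1, -1, 0, 0;
     -1, 2, -1, 0, 0;
     -1, -1, 2, 0, 0;
     0, 0, 0, 2, -2;
     0, 0, 0, -2, 2]

/-- The vectors a₀ = e₃+e₄, a₁ = e₁+e₂, a₂ = e₀, b₀ = e₂+e₃, b₁ = e₀+e₁+e₄ in ℤ⁵
(indices 0,…,4). -/
def rootsDP3 : Fin 5 → (Fin 5 → ℤ) :=
  ![![0, 0, 0, 1, 1],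
    ![0, 1, 1, 0, 0],
    ![1, 0, 0, 0, 0],
    ![0, 0, 1, 1, 0],
    ![1, 1, 0, 0, 1]]

/-- Decoupling from local dP₄ to local dP₃: the Gram matrix of (a₀,a₁,a₂,b₀,b₁) with respect
to the `A₄⁽¹⁾` Cartan form is the `(A₂+A₁)⁽¹⁾` Cartan matrix; in particular the a's are
orthogonal to the b's. -/
theorem stmt_7 :
    ∀ i j : Fin 5, rootsDP3 i ⬝ᵥ CartanA4.mulVec (rootsDP3 j) = CartanA2A1 i j := by
  intro i j
  fin_cases i <;> fin_cases j <;> rfl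
end

section
/- Define mutation of a pair (B, c), where B is an n×n antisymmetric integer matrix and c = (c₁,…,c_n) is a tuple of vectors of ℤⁿ, at a node k by: B ↦ μ_k(B) with μ_k(B)_{ij} = −B_{ij} if i = k or j = k and μ_k(B)_{ij} = B_{ij} + (B_{ik}|B_{kj}| + |B_{ik}|B_{kj})/2 otherwise; and c ↦ μ_k(c) with μ_k(c)_k = −c_k and μ_k(c)_j = c_j + max(B_{jk},0)·c_k for j ≠ k (using the matrix B current at the time of the mutation). Let B^{dP₃} be the 6×6 matrix with B_{ij} = 1 if (i−j) mod 6 ∈ {1,2}, B_{ij} = −1 if (i−j) mod 6 ∈ {4,5}, and 0 otherwise, and let δ = e₁+e₂+e₃+e₄+e₅+e₆. Starting from (B^{dP₃}, (e₁,…,e₆)), apply the fifteen mutations μ₁, μ₃, μ₁, μ₅, μ₁, μ₂, μ₄, μ₂, μ₆, μ₂, μ₁, μ₃, μ₁, μ₅, μ₁ successively in this order, and then relabel the nodes by ρ = (1 2)(3 4)(5 6), i.e. pass to B''_{ij} = B_{ρ(i)ρ(j)} and c''_i = c_{ρ(i)}. Then B'' = B^{dP₃} and c'' = (e₁+δ,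 e₂−δ, e₃+δ, e₄−δ, e₅+δ, e₆−δ). Consequently the induced ℤ-linear map M : ℤ⁶ → ℤ⁶ determined by e_i ↦ c''_i satisfies Mⁿ(e_i) = e_i + (−1)^{i+1}·n·δ for every n ≥ 0 and every 1 ≤ i ≤ 6. -/
open Matrix

/-- The antisymmetrized adjacency matrix of the local dP₃ BPS quiver. -/
def BdP3 : Matrix (Fin 6) (Fin 6) ℤ :=
  !![0, -1, -1, 0, 1, 1;
     1, 0, -1, -1, 0, 1;
     1, 1, 0, -1, -1, 0;
     0, 1, 1, 0, -1, -1;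
     -1, 0, 1, 1, 0, -1;
     -1, -1, 0, 1, 1, 0]

/-- Standard basis of ℤ⁶. -/
def e6 : Fin 6 → (Fin 6 → ℤ) := fun i => Pi.single i 1

/-- The null root δ = e₁+e₂+e₃+e₄+e₅+e₆ (the D0-brane charge). -/
def δdP3 : Fin 6 → ℤ := fun _ => 1

/-- The fifteen mutations μ₁, μ₃, μ₁, μ₅, μ₁, μ₂, μ₄, μ₂, μ₆, μ₂, μ₁, μ₃, μ₁, μ₅, μ₁
(0-indexed nodes). -/
def muSeq15 : List (Fin 6) := [0, 2, 0, 4, 0, 1, 3, 1, 5, 1, 0, 2, 0, 4, 0]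

/-- Result of applying the fifteen mutations to `(B^{dP₃}, (e₁,…,e₆))`. -/
def res15 : Matrix (Fin 6) (Fin 6) ℤ × (Fin 6 → (Fin 6 → ℤ)) :=
  muSeq15.foldl mutStep (BdP3, e6)

/-- The relabelling permutation ρ = (1 2)(3 4)(5 6), 0-indexed. -/
def ρdP3 : Fin 6 → Fin 6 := ![1, 0, 3, 2, 5, 4]

lemma part1 : ∀ i j, res15.1 (ρdP3 i) (ρdP3 j) = BdP3 i j := by
  intro i j; fin_cases i <;> fin_cases j <;> decide

lemma part2 : ∀ i, res15.2 (ρdP3 i) = e6 i + ((-1 : ℤ) ^ (i : ℕ)) • δdP3 := by decide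

lemma hdelta : δdP3 = ∑ j, e6 j := by decide

lemma hsign : (∑ j : Fin 6, ((-1 : ℤ) ^ (j : ℕ))) = 0 := by decide

/-- After the fifteen mutations and the relabelling ρ, the quiver is unchanged and the charges
are `(e₁+δ, e₂−δ, e₃+δ, e₄−δ, e₅+δ, e₆−δ)`; consequently the induced linear map `M` with
`M(e_i) = c''_i` satisfies `Mⁿ(e_i) = e_i + (−1)^(i+1)·n·δ` (1-indexed signs). -/
theorem stmt_12 :
    (∀ i j, res15.1 (ρdP3 i) (ρdP3 j) = BdP3 i j) ∧
    (∀ i, res15.2 (ρdP3 i) = e6 i + ((-1 : ℤ) ^ (i : ℕ)) • δdP3) ∧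
    (∀ M : (Fin 6 → ℤ) →ₗ[ℤ] (Fin 6 → ℤ),
      (∀ i, M (e6 i) = res15.2 (ρdP3 i)) →
      ∀ n : ℕ, ∀ i : Fin 6,
        (⇑M)^[n] (e6 i) = e6 i + ((-1 : ℤ) ^ (i : ℕ) * (n : ℤ)) • δdP3) := by
  refine ⟨part1, part2, ?_⟩
  intro M hM
  have hMe : ∀ i, M (e6 i) = e6 i + ((-1 : ℤ) ^ (i : ℕ)) • δdP3 := by
    intro i; rw [hM i, part2 i]
  have hMδ : M δdP3 = δdP3 := by
    rw [hdelta, map_sum]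
    simp only [hMe]
    rw [Finset.sum_add_distrib, ← Finset.sum_smul, hsign, zero_smul, add_zero]
  intro n
  induction n with
  | zero => intro i; simp
  | succ n ih =>
    intro i
    rw [Function.iterate_succ_apply', ih i, map_add, _root_.map_smul, hMδ, hMe i]
    push_cast
    rw [mul_add, mul_one, add_smul]
    abel
end
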